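/- Let V be a finite type with at least two elements, let c : V → V → ℝ be nonnegative, and let p : V → ℝ satisfy 0 ≤ p(v) < 1 for all v. Define γ : V → ℕ → ℝ by γ(v, 0) = 0 and γ(v, i+1) = min_{u ≠ v} (1 − p(v)) · (c(v, u) + γ(u, i)). Let v ∈ V, let q̄ ≥ 0 be a real number, and let u_1, …, u_k be pairwise distinct vertices, each different from v; set u_0 := v. Then the heuristic value q̄ · γ(v, k) is at most the true expected cost-to-go of this completion: q̄ · γ(v, k) ≤ q̄ · ∑_{i=0}^{k−1} (∏_{j=0}^{i} (1 − p(u_j))) · c(u_i, u_{i+1}). In particular, the heuristic h(s) = (q(s)/(1 − p(v(s)))) · γ(v(s), k(s)) is admissible: it never exceeds the minimum expected cost of any path from the current vertex that visits all k unvisited vertices exactly once. -/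

import Mathlib

/-!
Unrolling the expected cost of a completion once gives
`(1 - p u₀) * (c u₀ u₁ + cost of the completion starting at u₁)`, while the table `γ` is the
minimum of the same expression over all first steps `u₁ ≠ u₀`. Induction on the number of
remaining vertices then bounds `γ (u 0) k` by the cost; the factor `1 - p u₀ ≥ 0` keeps the
inequality monotone.
-/

open Finset

section Admissibility

variable {V : Type*} (p : V → ℝ) (c : V → V → ℝ)

/-- Expected cost of following `w 0, w 1, …, w k`, each step being paid only if the target has
not been found at any vertex visited so far. -/
def expectedCost (w : ℕ → V) (k : ℕ) : ℝ :=
  ∑ i ∈ range k, (∏ j ∈ range (i + 1), (1 - p (w j))) * c (w i) (w (i + 1))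

theorem expectedCost_zero (w : ℕ → V) : expectedCost p c w 0 = 0 := by
  simp [expectedCost]

theorem expectedCost_succ (w : ℕ → V) (k : ℕ) :
    expectedCost p c w (k + 1) =
      (1 - p (w 0)) * (c (w 0) (w 1) + expectedCost p c (fun i => w (i + 1)) k) := by
  rw [expectedCost, sum_range_succ', mul_add, expectedCost, mul_sum, add_comm]
  congr 1
  · simp [mul_comm]
  · refine sum_congr rfl fun i _ => ?_
    rw [prod_range_succ' (fun j => 1 - p (w j))]
    ring

theorem le_expectedCost_of_step_le {γ : V → ℕ → ℝ} (hp : ∀ v, p v ≤ 1)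
    (hγ0 : ∀ v, γ v 0 ≤ 0)
    (hγ : ∀ v u i, u ≠ v → γ v (i + 1) ≤ (1 - p v) * (c v u + γ u i)) :
    ∀ (k : ℕ) (w : ℕ → V), (∀ i < k, w (i + 1) ≠ w i) → γ (w 0) k ≤ expectedCost p c w k
  | 0, w, _ => by simpa [expectedCost_zero] using hγ0 (w 0)
  | k + 1, w, hw => by
    have htail : γ (w 1) k ≤ expectedCost p c (fun i => w (i + 1)) k :=
      le_expectedCost_of_step_le hp hγ0 hγ k (fun i => w (i + 1)) fun i hi => hw (i + 1) (by omega)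
    calc γ (w 0) (k + 1) ≤ (1 - p (w 0)) * (c (w 0) (w 1) + γ (w 1) k) :=
          hγ _ _ _ (hw 0 k.succ_pos)
      _ ≤ (1 - p (w 0)) * (c (w 0) (w 1) + expectedCost p c (fun i => w (i + 1)) k) := by
          gcongr
          linarith [hp (w 0)]
      _ = expectedCost p c w (k + 1) := (expectedCost_succ p c w k).symm

theorem step_le_of_eq_inf' [Fintype V] [DecidableEq V] {γ : V → ℕ → ℝ}
    (hγ : ∀ (v : V) (i : ℕ) (hne : (univ.erase v).Nonempty),
      γ v (i + 1) = (univ.erase v).inf' hne (fun u => (1 - p v) * (c v u + γ u i)))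
    (v u : V) (i : ℕ) (huv : u ≠ v) : γ v (i + 1) ≤ (1 - p v) * (c v u + γ u i) := by
  have hmem : u ∈ univ.erase v := mem_erase.2 ⟨huv, mem_univ u⟩
  rw [hγ v i ⟨u, hmem⟩]
  exact inf'_le _ hmem

end Admissibility

theorem heuristic_admissible_general {V : Type*} [Fintype V] [DecidableEq V]
    (c : V → V → ℝ)
    (p : V → ℝ) (hp : ∀ v, 0 ≤ p v ∧ p v < 1)
    (γ : V → ℕ → ℝ)
    (hγ0 : ∀ v, γ v 0 = 0)
    (hγ : ∀ (v : V) (i : ℕ) (hne : (Finset.univ.erase v).Nonempty),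
      γ v (i + 1)
        = (Finset.univ.erase v).inf' hne (fun u => (1 - p v) * (c v u + γ u i)))
    (qbar : ℝ) (hqbar : 0 ≤ qbar)
    (v : V) (k : ℕ) (u : ℕ → V) (hu0 : u 0 = v)
    (huv : ∀ i, 1 ≤ i → i ≤ k → u i ≠ v)
    (huinj : ∀ i j, 1 ≤ i → i ≤ k → 1 ≤ j → j ≤ k → u i = u j → i = j) :
    qbar * γ v k ≤ qbar * ∑ i ∈ Finset.range k,
        (∏ j ∈ Finset.range (i + 1), (1 - p (u j))) * c (u i) (u (i + 1)) := by
  have hconsecutive : ∀ i < k, u (i + 1) ≠ u i := by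
    rintro (_ | i) hi
    · simpa [hu0] using huv 1 le_rfl hi
    · exact fun h => absurd (huinj _ _ (by omega) hi (by omega) hi.le h) (by omega)
  have hadm := le_expectedCost_of_step_le p c (fun v => (hp v).2.le) (fun v => (hγ0 v).le)
    (step_le_of_eq_inf' p c hγ) k u hconsecutive
  rw [hu0] at hadm
  exact mul_le_mul_of_nonneg_left hadm hqbar

/-- **admissibility of the RPT* heuristic.** Let `V` be a finite
type with at least two elements, `c` nonnegative edge costs, `0 ≤ p v < 1`, and
let `γ` be the RPT* heuristic table: `γ v 0 = 0` and
`γ v (i+1) = min_{u ≠ v} (1 - p v) * (c v u + γ u i)`. Let `v` be a vertex,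
`q̄ ≥ 0`, and let `u 1, …, u k` be pairwise distinct vertices, each different
from `v`, with `u 0 = v`. Then the heuristic value `q̄ * γ v k` is at most the
true expected cost-to-go
`q̄ * ∑_{i=0}^{k-1} (∏_{j=0}^{i} (1 - p (u j))) * c (u i) (u (i+1))` of this
completion, i.e. the heuristic is admissible. -/
theorem heuristic_admissible {V : Type*} [Fintype V] [DecidableEq V] [Nontrivial V]
    (c : V → V → ℝ) (hc : ∀ a b, 0 ≤ c a b)
    (p : V → ℝ) (hp : ∀ v, 0 ≤ p v ∧ p v < 1)
    (γ : V → ℕ → ℝ)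
    (hγ0 : ∀ v, γ v 0 = 0)
    (hγ : ∀ (v : V) (i : ℕ) (hne : (Finset.univ.erase v).Nonempty),
      γ v (i + 1)
        = (Finset.univ.erase v).inf' hne (fun u => (1 - p v) * (c v u + γ u i)))
    (qbar : ℝ) (hqbar : 0 ≤ qbar)
    (v : V) (k : ℕ) (u : ℕ → V) (hu0 : u 0 = v)
    (huv : ∀ i, 1 ≤ i → i ≤ k → u i ≠ v)
    (huinj : ∀ i j, 1 ≤ i → i ≤ k → 1 ≤ j → j ≤ k → u i = u j → i = j) :
    qbar * γ v k ≤ qbar * ∑ i ∈ Finset.range k,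
        (∏ j ∈ Finset.range (i + 1), (1 - p (u j))) * c (u i) (u (i + 1)) :=
  heuristic_admissible_general c p hp γ hγ0 hγ qbar hqbar v k u hu0 huv huinj
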